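/- arXiv:2309.05309 — 2 statements merged into one kernel-verified Lean document; each statement's English description precedes it below -/
import Mathlib

section
/- Let f be μ-strongly convex with L-Lipschitz gradient and minimizer x*. Suppose x_{k+1} = x_k - (m/(L√M))·Q_k^{-1/2} ∇f(x_k), where each Q_k ∈ ℝ^{n×n} is symmetric with m·I ⪯ Q_k ⪯ M·I, 0 < m ≤ M. Then f(x_{k+1}) - f(x*) ≤ c·(f(x_k) - f(x*)) with c = 1 - mμ/(ML) ∈ (0,1). -/
open Matrix Set
open scoped RealInnerProductSpace

lemma aux_inner_eq_dot {n : ℕ} (a b : EuclideanSpace ℝ (Fin n)) :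
    ⟪a, b⟫ = (a : Fin n → ℝ) ⬝ᵥ (b : Fin n → ℝ) := by
  simp [PiLp.inner_apply, dotProduct, RCLike.inner_apply, mul_comm]

lemma aux_norm_sq_eq_dot {n : ℕ} (a : EuclideanSpace ℝ (Fin n)) :
    ‖a‖ ^ 2 = (a : Fin n → ℝ) ⬝ᵥ (a : Fin n → ℝ) := by
  rw [← real_inner_self_eq_norm_sq, aux_inner_eq_dot]

lemma aux_symm_move {n : ℕ} (P : Matrix (Fin n) (Fin n) ℝ) (hP : P.IsSymm)
    (a b : Fin n → ℝ) : (P.mulVec a) ⬝ᵥ b = a ⬝ᵥ (P.mulVec b) := by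
  rw [dotProduct_comm, dotProduct_mulVec, ← mulVec_transpose, hP.eq, dotProduct_comm]

lemma aux_cs {n : ℕ} (P : Matrix (Fin n) (Fin n) ℝ) (hP : P.IsSymm)
    (hpsd : ∀ z : Fin n → ℝ, 0 ≤ z ⬝ᵥ P.mulVec z) (u v : Fin n → ℝ) :
    (u ⬝ᵥ P.mulVec v) ^ 2 ≤ (u ⬝ᵥ P.mulVec u) * (v ⬝ᵥ P.mulVec v) := by
  have hsymm : v ⬝ᵥ P.mulVec u = u ⬝ᵥ P.mulVec v := by
    rw [← aux_symm_move P hP v u, dotProduct_comm]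
  have key : ∀ t : ℝ, 0 ≤ (v ⬝ᵥ P.mulVec v) * (t * t) + (2 * (u ⬝ᵥ P.mulVec v)) * t
      + (u ⬝ᵥ P.mulVec u) := by
    intro t
    have h := hpsd (u + t • v)
    have hexp : (u + t • v) ⬝ᵥ P.mulVec (u + t • v)
        = (v ⬝ᵥ P.mulVec v) * (t * t) + (2 * (u ⬝ᵥ P.mulVec v)) * t + (u ⬝ᵥ P.mulVec u) := by
      rw [Matrix.mulVec_add, Matrix.mulVec_smul]
      simp only [dotProduct_add, add_dotProduct, dotProduct_smul, smul_dotProduct,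
        smul_eq_mul]
      rw [hsymm]; ring
    linarith [hexp ▸ h]
  have hd := discrim_le_zero key
  rw [discrim] at hd
  nlinarith [hd]

lemma aux_descent {E : Type*} [NormedAddCommGroup E] [InnerProductSpace ℝ E] [CompleteSpace E]
    (f : E → ℝ) (g : E → E) (L : ℝ)
    (hgrad : ∀ x, HasGradientAt f (g x) x)
    (hlip : ∀ x y, ‖g y - g x‖ ≤ L * ‖y - x‖) (x y : E) :
    f y ≤ f x + ⟪g x, y - x⟫ + L / 2 * ‖y - x‖ ^ 2 := by
  set v := y - x with hv
  have hline : ∀ t : ℝ, HasDerivAt (fun s : ℝ => f (x + s • v)) ⟪g (x + t • v), v⟫ t := by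
    intro t
    have h1 : HasDerivAt (fun s : ℝ => x + s • v) v t := by
      simpa using ((hasDerivAt_id t).smul_const v).const_add x
    have h2 := ((hgrad (x + t • v)).hasFDerivAt).comp_hasDerivAt t h1
    simpa [Function.comp_def] using h2
  set F : ℝ → ℝ := fun s => f (x + s • v) - s * ⟪g x, v⟫ - L * (s * s) * ‖v‖ ^ 2 / 2 with hF
  have hFd : ∀ t : ℝ, HasDerivAt F
      (⟪g (x + t • v), v⟫ - ⟪g x, v⟫ - L * t * ‖v‖ ^ 2) t := by
    intro t
    have h1 : HasDerivAt (fun s : ℝ => s * ⟪g x, v⟫) ⟪g x, v⟫ t := by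
      simpa using (hasDerivAt_id t).mul_const ⟪g x, v⟫
    have h2 : HasDerivAt (fun s : ℝ => L * (s * s) * ‖v‖ ^ 2 / 2) (L * t * ‖v‖ ^ 2) t := by
      have h3 : HasDerivAt (fun s : ℝ => s * s) (2 * t) t := by
        have := (hasDerivAt_id' t).mul (hasDerivAt_id' t); simpa [two_mul, Pi.mul_def] using this
      have := (((h3.const_mul L).mul_const (‖v‖ ^ 2)).div_const 2)
      exact this.congr_deriv (by ring)
    exact ((hline t).sub h1).sub h2
  have hanti : AntitoneOn F (Icc (0:ℝ) 1) := by
    apply antitoneOn_of_deriv_nonpos (convex_Icc 0 1)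
    · exact fun t _ => ((hFd t).differentiableAt).continuousAt.continuousWithinAt
    · exact fun t _ => ((hFd t).differentiableAt).differentiableWithinAt
    · intro t ht
      rw [interior_Icc] at ht
      rw [(hFd t).deriv]
      have hsub : ⟪g (x + t • v) - g x, v⟫ ≤ ‖g (x + t • v) - g x‖ * ‖v‖ :=
        real_inner_le_norm _ _
      have hl := hlip x (x + t • v)
      have hnorm : ‖x + t • v - x‖ = t * ‖v‖ := by
        simp [norm_smul, abs_of_pos ht.1]
      rw [hnorm] at hl
      rw [inner_sub_left] at hsub
      nlinarith [norm_nonneg v, norm_nonneg (g (x + t • v) - g x), ht.1.le, sq_nonneg ‖v‖]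
  have h01 := hanti (left_mem_Icc.2 zero_le_one) (right_mem_Icc.2 zero_le_one) zero_le_one
  have hF0 : F 0 = f x := by simp [hF]
  have hF1 : F 1 = f y - ⟪g x, v⟫ - L * ‖v‖ ^ 2 / 2 := by
    simp [hF, hv]
  rw [hF0, hF1] at h01
  linarith

lemma aux_id1 (mm LL MM ss vv : ℝ) (hss : ss * ss = MM) :
    mm / (LL * ss) * (vv / ss) = mm / (LL * MM) * vv := by
  rw [div_mul_div_comm, mul_assoc, hss, div_mul_eq_mul_div]
lemma aux_id2 (mm LL MM vv : ℝ) (hL : LL ≠ 0) (hM : MM ≠ 0) (hm : mm ≠ 0) :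
    LL / 2 * (mm * mm / (LL * LL * MM)) * (vv / mm) = mm / (2 * LL * MM) * vv := by
  field_simp
lemma aux_id3 (mm LL MM : ℝ) (hL : LL ≠ 0) (hM : MM ≠ 0) :
    mm / (2 * LL * MM) + mm / (2 * LL * MM) = mm / (LL * MM) := by
  rw [← add_div, ← two_mul, show (2:ℝ) * LL * MM = 2 * (LL * MM) by ring,
    mul_div_mul_left _ _ (two_ne_zero : (2:ℝ) ≠ 0)]
lemma aux_id4 (mm LL MM μμ D : ℝ) (hL : LL ≠ 0) (hM : MM ≠ 0) :
    D - mm / (2 * LL * MM) * (2 * μμ * D) = (1 - mm * μμ / (MM * LL)) * D := by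
  field_simp

/-- Linear convergence of fine preconditioned steps with `Q_k^{-1/2}`:
`f(x_{k+1}) - f(x*) ≤ c (f(x_k) - f(x*))` with `c = 1 - mμ/(ML) ∈ (0,1)`. -/
theorem stmt_9 {n : ℕ} (f : EuclideanSpace ℝ (Fin n) → ℝ)
    (g : EuclideanSpace ℝ (Fin n) → EuclideanSpace ℝ (Fin n)) (μ L : ℝ)
    (hμ : 0 < μ) (hμL : μ < L)
    (hgrad : ∀ x, HasGradientAt f (g x) x)
    (hlip : ∀ x y, ‖g y - g x‖ ≤ L * ‖y - x‖)
    (hsc : ∀ x y : EuclideanSpace ℝ (Fin n),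
      f y ≥ f x + ⟪g x, y - x⟫ + μ / 2 * ‖y - x‖ ^ 2)
    (xstar : EuclideanSpace ℝ (Fin n)) (hmin : ∀ x, f xstar ≤ f x)
    (m M : ℝ) (hm : 0 < m) (hmM : m ≤ M)
    (Q S : ℕ → Matrix (Fin n) (Fin n) ℝ)
    (hQsym : ∀ k, (Q k).IsSymm)
    (hQlow : ∀ k, (Q k - m • (1 : Matrix (Fin n) (Fin n) ℝ)).PosSemidef)
    (hQup : ∀ k, (M • (1 : Matrix (Fin n) (Fin n) ℝ) - Q k).PosSemidef)
    (hSsym : ∀ k, (S k).IsSymm) (hSpd : ∀ k, (S k).PosDef)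
    (hS : ∀ k, Q k * (S k * S k) = 1)
    (x : ℕ → EuclideanSpace ℝ (Fin n))
    (d : ℕ → EuclideanSpace ℝ (Fin n))
    (hd : ∀ k, d k = (S k).mulVec (g (x k)))
    (hupd : ∀ k, x (k + 1) = x k - (m / (L * Real.sqrt M)) • d k)
    (c : ℝ) (hc : c = 1 - m * μ / (M * L)) :
    (0 < c ∧ c < 1) ∧ ∀ k, f (x (k + 1)) - f xstar ≤ c * (f (x k) - f xstar) := by
  have hL : 0 < L := hμ.trans hμL
  have hM : 0 < M := hm.trans_le hmM
  have hs : 0 < Real.sqrt M := Real.sqrt_pos.2 hM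
  have hss : Real.sqrt M * Real.sqrt M = M := Real.mul_self_sqrt hM.le
  constructor
  · constructor
    · rw [hc]
      have h1 : m * μ / (M * L) < 1 := (div_lt_one (by positivity)).2 (by nlinarith)
      linarith
    · rw [hc]
      have h2 : 0 < m * μ / (M * L) := by positivity
      linarith
  intro k
  set s := Real.sqrt M with hsdef
  set t := m / (L * s) with ht
  have htpos : 0 < t := by positivity
  have hL0 : L ≠ 0 := hL.ne'
  have hM0 : M ≠ 0 := hM.ne'
  have hm0 : m ≠ 0 := hm.ne'
  have hs0 : s ≠ 0 := hs.ne'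
  have hμ0 : μ ≠ 0 := hμ.ne'
  set A := Q k with hA
  set T := S k with hT
  set v : Fin n → ℝ := (g (x k) : Fin n → ℝ) with hv
  set w : Fin n → ℝ := T.mulVec v with hw
  -- quadratic form bounds for A
  have hlow : ∀ z : Fin n → ℝ, m * (z ⬝ᵥ z) ≤ z ⬝ᵥ A.mulVec z := by
    intro z
    have h := (hQlow k).dotProduct_mulVec_nonneg z
    simp only [Matrix.sub_mulVec, Matrix.smul_mulVec, Matrix.one_mulVec,
      dotProduct_sub, dotProduct_smul, smul_eq_mul, star_trivial] at h
    linarith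
  have hup : ∀ z : Fin n → ℝ, z ⬝ᵥ A.mulVec z ≤ M * (z ⬝ᵥ z) := by
    intro z
    have h := (hQup k).dotProduct_mulVec_nonneg z
    simp only [Matrix.sub_mulVec, Matrix.smul_mulVec, Matrix.one_mulVec,
      dotProduct_sub, dotProduct_smul, smul_eq_mul, star_trivial] at h
    linarith
  have hzz : ∀ z : Fin n → ℝ, 0 ≤ z ⬝ᵥ z := by
    intro z
    exact Finset.sum_nonneg fun i _ => mul_self_nonneg _
  have hApsd : ∀ z : Fin n → ℝ, 0 ≤ z ⬝ᵥ A.mulVec z := fun z =>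
    le_trans (mul_nonneg hm.le (hzz z)) (hlow z)
  have hTpsd : ∀ z : Fin n → ℝ, 0 ≤ z ⬝ᵥ T.mulVec z := by
    intro z
    have h := (hSpd k).posSemidef.dotProduct_mulVec_nonneg z
    simpa using h
  -- matrix algebra
  have h1 : A * (T * T) = 1 := hS k
  have h2 : (T * T) * A = 1 := mul_eq_one_comm.mp h1
  have hcomm : A * T = T * A := by
    calc A * T = A * T * ((T * T) * A) := by rw [h2, mul_one]
    _ = (A * (T * T)) * (T * A) := by simp only [mul_assoc]
    _ = T * A := by rw [h1, one_mul]
  have hTAT : T * A * T = 1 := by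
    rw [mul_assoc, hcomm, ← mul_assoc, h2]
  have hTATv : ∀ z : Fin n → ℝ, T.mulVec (A.mulVec (T.mulVec z)) = z := by
    intro z
    rw [Matrix.mulVec_mulVec, Matrix.mulVec_mulVec, hTAT, Matrix.one_mulVec]
  -- key1 : m * (w ⬝ᵥ w) ≤ v ⬝ᵥ v
  have hwAw : w ⬝ᵥ A.mulVec w = v ⬝ᵥ v := by
    rw [hw, aux_symm_move T (hSsym k) v (A.mulVec (T.mulVec v)), hTATv]
  have key1 : m * (w ⬝ᵥ w) ≤ v ⬝ᵥ v := by
    have := hlow w; rw [hwAw] at this; exact this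
  -- key2 : v ⬝ᵥ v ≤ s * (v ⬝ᵥ w)
  have key2 : v ⬝ᵥ v ≤ s * (v ⬝ᵥ w) := by
    have hvw0 : 0 ≤ v ⬝ᵥ w := hTpsd v
    have hcs1 := aux_cs T (hSsym k) hTpsd v (A.mulVec w)
    have hTAw : T.mulVec (A.mulVec w) = v := by rw [hw]; exact hTATv v
    rw [hTAw] at hcs1
    -- hcs1 : (v ⬝ᵥ v)^2 ≤ (v ⬝ᵥ T.mulVec v) * ((A.mulVec w) ⬝ᵥ v)
    have hBeq : (A.mulVec w) ⬝ᵥ v = w ⬝ᵥ A.mulVec v := aux_symm_move A (hQsym k) w v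
    have hcs2 := aux_cs A (hQsym k) hApsd w v
    rw [hwAw] at hcs2
    have hAvv := hup v
    -- hcs2 : (w ⬝ᵥ A.mulVec v)^2 ≤ (v ⬝ᵥ v) * (v ⬝ᵥ A.mulVec v) ≤ (v⬝ᵥv) * (M (v⬝ᵥv))
    have hB2 : (w ⬝ᵥ A.mulVec v) ^ 2 ≤ M * (v ⬝ᵥ v) ^ 2 := by
      nlinarith [hzz v]
    have hBle : w ⬝ᵥ A.mulVec v ≤ s * (v ⬝ᵥ v) := by
      have h1 : w ⬝ᵥ A.mulVec v ≤ |w ⬝ᵥ A.mulVec v| := le_abs_self _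
      have h2 : |w ⬝ᵥ A.mulVec v| = Real.sqrt ((w ⬝ᵥ A.mulVec v) ^ 2) :=
        (Real.sqrt_sq_eq_abs _).symm
      have h3 : Real.sqrt ((w ⬝ᵥ A.mulVec v) ^ 2) ≤ Real.sqrt (M * (v ⬝ᵥ v) ^ 2) :=
        Real.sqrt_le_sqrt hB2
      have h4 : Real.sqrt (M * (v ⬝ᵥ v) ^ 2) = s * (v ⬝ᵥ v) := by
        rw [hsdef, Real.sqrt_mul hM.le, Real.sqrt_sq (hzz v)]
      linarith
    rcases (hzz v).eq_or_lt with h0 | hpos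
    · rw [← h0]
      positivity
    · -- (v⬝ᵥv)^2 ≤ (v⬝ᵥw) * (s * (v⬝ᵥv))
      have hchain : (v ⬝ᵥ v) * (v ⬝ᵥ v) ≤ (s * (v ⬝ᵥ w)) * (v ⬝ᵥ v) := by
        have hvTv : v ⬝ᵥ T.mulVec v = v ⬝ᵥ w := by rw [hw]
        nlinarith [hcs1, hBeq, hBle, hvw0, hvTv]
      exact le_of_mul_le_mul_right hchain hpos
  -- descent step
  have hdesc := aux_descent f g L hgrad hlip (x k) (x (k + 1))
  have hxd : x (k + 1) - x k = -(t • d k) := by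
    rw [hupd k]; abel
  rw [hxd] at hdesc
  have hinner : ⟪g (x k), -(t • d k)⟫ = -(t * (v ⬝ᵥ w)) := by
    rw [inner_neg_right, real_inner_smul_right, aux_inner_eq_dot]
    rw [hd k]
  have hnormd : ‖-(t • d k)‖ ^ 2 = t * t * (w ⬝ᵥ w) := by
    rw [norm_neg, norm_smul, mul_pow, aux_norm_sq_eq_dot]
    rw [hd k]
    rw [Real.norm_eq_abs, abs_of_pos htpos, sq]
  rw [hinner, hnormd] at hdesc
  -- arithmetic: combine
  have he2 : t * t = m * m / (L * L * M) := by
    rw [ht, div_mul_div_comm, show L * s * (L * s) = L * L * M by rw [← hss]; ring]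
  have hb1 : m / (L * M) * (v ⬝ᵥ v) ≤ t * (v ⬝ᵥ w) := by
    have h1 : (v ⬝ᵥ v) / s ≤ v ⬝ᵥ w := (div_le_iff₀ hs).2 (by linarith [key2])
    have h2 : t * ((v ⬝ᵥ v) / s) ≤ t * (v ⬝ᵥ w) := mul_le_mul_of_nonneg_left h1 htpos.le
    have h3 : t * ((v ⬝ᵥ v) / s) = m / (L * M) * (v ⬝ᵥ v) := by
      rw [ht]; exact aux_id1 m L M s _ hss
    linarith
  have hb2 : L / 2 * (t * t) * (w ⬝ᵥ w) ≤ m / (2 * L * M) * (v ⬝ᵥ v) := by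
    have h1 : w ⬝ᵥ w ≤ (v ⬝ᵥ v) / m := (le_div_iff₀ hm).2 (by linarith [key1])
    have h2 : L / 2 * (t * t) * (w ⬝ᵥ w) ≤ L / 2 * (t * t) * ((v ⬝ᵥ v) / m) := by
      apply mul_le_mul_of_nonneg_left h1
      positivity
    have h3 : L / 2 * (t * t) * ((v ⬝ᵥ v) / m) = m / (2 * L * M) * (v ⬝ᵥ v) := by
      rw [he2]; exact aux_id2 m L M _ hL0 hM0 hm0
    linarith
  have hhalf : m / (2 * L * M) + m / (2 * L * M) = m / (L * M) :=
    aux_id3 m L M hL0 hM0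
  have hstep : f (x (k + 1)) ≤ f (x k) - m / (2 * L * M) * (v ⬝ᵥ v) := by
    have hassoc : L / 2 * (t * t * (w ⬝ᵥ w)) = L / 2 * (t * t) * (w ⬝ᵥ w) := by ring
    rw [hassoc] at hdesc
    have hsplit : m / (L * M) * (v ⬝ᵥ v)
        = m / (2 * L * M) * (v ⬝ᵥ v) + m / (2 * L * M) * (v ⬝ᵥ v) := by
      rw [← hhalf]; ring
    linarith [hdesc, hb1, hb2]
  -- PL inequality
  have hPL : 2 * μ * (f (x k) - f xstar) ≤ v ⬝ᵥ v := by
    have h := hsc (x k) xstar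
    have hvv : ‖g (x k)‖ ^ 2 = v ⬝ᵥ v := aux_norm_sq_eq_dot (g (x k))
    have hcs : -(‖g (x k)‖ * ‖xstar - x k‖) ≤ ⟪g (x k), xstar - x k⟫ := by
      have := abs_real_inner_le_norm (g (x k)) (xstar - x k)
      have h2 := neg_abs_le ⟪g (x k), xstar - x k⟫
      linarith
    have h8 : f (x k) - f xstar ≤ ‖g (x k)‖ * ‖xstar - x k‖ - μ / 2 * ‖xstar - x k‖ ^ 2 := by
      linarith only [h, hcs]
    have h9 : 2 * μ * (f (x k) - f xstar)
        ≤ 2 * μ * (‖g (x k)‖ * ‖xstar - x k‖ - μ / 2 * ‖xstar - x k‖ ^ 2) := by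
      apply mul_le_mul_of_nonneg_left h8
      positivity
    have h10 : 2 * μ * (‖g (x k)‖ * ‖xstar - x k‖ - μ / 2 * ‖xstar - x k‖ ^ 2)
        ≤ ‖g (x k)‖ ^ 2 := by
      nlinarith only [sq_nonneg (‖g (x k)‖ - μ * ‖xstar - x k‖), hμ]
    linarith only [h9, h10, hvv]
  -- conclude
  have hD : 0 ≤ f (x k) - f xstar := by linarith [hmin (x k)]
  have hb3 : m / (2 * L * M) * (2 * μ * (f (x k) - f xstar)) ≤ m / (2 * L * M) * (v ⬝ᵥ v) :=
    mul_le_mul_of_nonneg_left hPL (by positivity)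
  have hcoef : (f (x k) - f xstar) - m / (2 * L * M) * (2 * μ * (f (x k) - f xstar))
      = c * (f (x k) - f xstar) := by
    rw [hc]; exact aux_id4 m L M μ _ hL0 hM0
  linarith
end

section
/- Let f be μ-strongly convex with L-Lipschitz gradient, 0 < μ ≤ L. If x_{k+1} = x_k - t B_k ∇f(x_k) where each B_k is symmetric with α·I ⪯ B_k ⪯ β·I (0 < α ≤ β) and t = α/(Lβ²), then f(x_k) - f(x*) ≤ (1 - α²μ/(β²L))ᵏ (f(x₀) - f(x*)). -/
set_option maxHeartbeats 1000000

open Matrix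
open scoped RealInnerProductSpace

section helpers
variable {n : ℕ} {M : Matrix (Fin n) (Fin n) ℝ}

lemma dot_self_eq_norm_sq (v : EuclideanSpace ℝ (Fin n)) : dotProduct v v = ‖v‖ ^ 2 := by
  rw [← real_inner_self_eq_norm_sq, EuclideanSpace.inner_eq_star_dotProduct, star_trivial]

lemma dot_eq_inner' (u v : EuclideanSpace ℝ (Fin n)) : dotProduct u v = ⟪u, v⟫ := by
  simp [PiLp.inner_apply, dotProduct, RCLike.inner_apply, mul_comm]

lemma dot_mulVec_symm (hM : M.IsSymm) (u v : Fin n → ℝ) :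
    dotProduct u (M *ᵥ v) = dotProduct v (M *ᵥ u) := by
  rw [dotProduct_mulVec, ← mulVec_transpose, hM.eq, dotProduct_comm]

lemma dot_mulVec_CS (hM : M.IsSymm) (hpos : ∀ z : Fin n → ℝ, 0 ≤ dotProduct z (M *ᵥ z))
    (u v : Fin n → ℝ) :
    (dotProduct u (M *ᵥ v)) ^ 2 ≤ dotProduct u (M *ᵥ u) * dotProduct v (M *ᵥ v) := by
  have hsym := dot_mulVec_symm hM v u
  have key : ∀ lam : ℝ, 0 ≤ (dotProduct v (M *ᵥ v)) * (lam * lam)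
      + (2 * dotProduct u (M *ᵥ v)) * lam + dotProduct u (M *ᵥ u) := by
    intro lam
    have h := hpos (u + lam • v)
    have hexp : dotProduct (u + lam • v) (M *ᵥ (u + lam • v))
        = (dotProduct v (M *ᵥ v)) * (lam * lam)
          + (2 * dotProduct u (M *ᵥ v)) * lam + dotProduct u (M *ᵥ u) := by
      simp only [mulVec_add, mulVec_smul, dotProduct_add, dotProduct_smul, add_dotProduct,
        smul_dotProduct, smul_eq_mul]
      rw [hsym]; ring
    rw [hexp] at h
    exact h
  have hdisc := discrim_le_zero key
  rw [discrim] at hdisc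
  nlinarith [hdisc]

lemma descent_lemma {f : EuclideanSpace ℝ (Fin n) → ℝ}
    {g : EuclideanSpace ℝ (Fin n) → EuclideanSpace ℝ (Fin n)} {L : ℝ}
    (hgrad : ∀ x, HasGradientAt f (g x) x)
    (hlip : ∀ x y, ‖g y - g x‖ ≤ L * ‖y - x‖) (x y : EuclideanSpace ℝ (Fin n)) :
    f y ≤ f x + ⟪g x, y - x⟫ + L / 2 * ‖y - x‖ ^ 2 := by
  set u := y - x with hu
  set φ : ℝ → ℝ := fun s => f (x + s • u) - s * ⟪g x, u⟫ - L * s ^ 2 / 2 * ‖u‖ ^ 2 with hφ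
  set D : ℝ → ℝ := fun s => ⟪g (x + s • u), u⟫ - ⟪g x, u⟫ - L * s * ‖u‖ ^ 2 with hD
  have hder : ∀ s : ℝ, HasDerivAt φ (D s) s := by
    intro s
    have hline : HasDerivAt (fun s : ℝ => x + s • u) u s := by
      simpa using ((hasDerivAt_id s).smul_const u).const_add x
    have h1 : HasDerivAt (fun s : ℝ => f (x + s • u)) (⟪g (x + s • u), u⟫) s := by
      have := (hgrad (x + s • u)).hasFDerivAt.comp_hasDerivAt s hline
      simpa [InnerProductSpace.toDual_apply_apply, Function.comp_def] using this
    have h2 : HasDerivAt (fun s : ℝ => s * ⟪g x, u⟫) (⟪g x, u⟫) s := by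
      simpa using (hasDerivAt_id s).mul_const (⟪g x, u⟫)
    have h3 : HasDerivAt (fun s : ℝ => L * s ^ 2 / 2 * ‖u‖ ^ 2) (L * s * ‖u‖ ^ 2) s := by
      have h := (hasDerivAt_pow 2 s).const_mul (L / 2 * ‖u‖ ^ 2)
      have heq : (fun s : ℝ => L * s ^ 2 / 2 * ‖u‖ ^ 2) = fun z => L / 2 * ‖u‖ ^ 2 * z ^ 2 := by
        funext z; ring
      rw [heq]
      refine h.congr_deriv ?_
      push_cast; ring
    simpa [hφ, hD, Pi.sub_def] using (h1.sub h2).sub h3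
  have hmono : φ 1 ≤ φ 0 := by
    have := antitoneOn_of_deriv_nonpos (convex_Icc (0:ℝ) 1)
      (fun s _ => (hder s).differentiableAt.continuousAt.continuousWithinAt)
      (fun s _ => (hder s).differentiableAt.differentiableWithinAt)
      (fun s hs => by
        rw [(hder s).deriv]
        rw [interior_Icc] at hs
        have hlip' := hlip x (x + s • u)
        have hnorm : ‖x + s • u - x‖ = s * ‖u‖ := by
          simp [norm_smul, abs_of_pos hs.1]
        have hcs : ⟪g (x + s • u) - g x, u⟫ ≤ ‖g (x + s • u) - g x‖ * ‖u‖ :=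
          real_inner_le_norm _ _
        have : ⟪g (x + s • u), u⟫ - ⟪g x, u⟫ ≤ L * s * ‖u‖ ^ 2 := by
          rw [← inner_sub_left]
          calc ⟪g (x + s • u) - g x, u⟫ ≤ ‖g (x + s • u) - g x‖ * ‖u‖ := hcs
            _ ≤ (L * (s * ‖u‖)) * ‖u‖ := by
                have h' := hlip'
                rw [hnorm] at h'
                exact mul_le_mul_of_nonneg_right h' (norm_nonneg _)
            _ = L * s * ‖u‖ ^ 2 := by ring
        simp only [hD]
        linarith)
      (Set.left_mem_Icc.mpr zero_le_one) (Set.right_mem_Icc.mpr zero_le_one) zero_le_one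
    exact this
  have hxy : x + u = y := by rw [hu]; abel
  simp only [hφ, one_smul, zero_smul, add_zero, hxy] at hmono
  nlinarith [hmono]
end helpers

/-- General preconditioned gradient descent: with symmetric preconditioners
`α·I ⪯ B_k ⪯ β·I` and step `t = α/(Lβ²)`,
`f(x_k) - f(x*) ≤ (1 - α²μ/(β²L))ᵏ (f(x₀) - f(x*))`. -/
theorem stmt_14 {n : ℕ} (f : EuclideanSpace ℝ (Fin n) → ℝ)
    (g : EuclideanSpace ℝ (Fin n) → EuclideanSpace ℝ (Fin n)) (μ L : ℝ)
    (hμ : 0 < μ) (hμL : μ ≤ L)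
    (hgrad : ∀ x, HasGradientAt f (g x) x)
    (hlip : ∀ x y, ‖g y - g x‖ ≤ L * ‖y - x‖)
    (hsc : ∀ x y : EuclideanSpace ℝ (Fin n),
      f y ≥ f x + ⟪g x, y - x⟫ + μ / 2 * ‖y - x‖ ^ 2)
    (xstar : EuclideanSpace ℝ (Fin n)) (hmin : ∀ x, f xstar ≤ f x)
    (α β : ℝ) (hα : 0 < α) (hαβ : α ≤ β)
    (B : ℕ → Matrix (Fin n) (Fin n) ℝ)
    (hBsym : ∀ k, (B k).IsSymm)
    (hBlow : ∀ k, (B k - α • (1 : Matrix (Fin n) (Fin n) ℝ)).PosSemidef)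
    (hBup : ∀ k, (β • (1 : Matrix (Fin n) (Fin n) ℝ) - B k).PosSemidef)
    (t : ℝ) (ht : t = α / (L * β ^ 2))
    (x : ℕ → EuclideanSpace ℝ (Fin n))
    (d : ℕ → EuclideanSpace ℝ (Fin n)) (hd : ∀ k, d k = (B k).mulVec (g (x k)))
    (hupd : ∀ k, x (k + 1) = x k - t • d k) :
    ∀ k, f (x k) - f xstar ≤ (1 - α ^ 2 * μ / (β ^ 2 * L)) ^ k * (f (x 0) - f xstar) := by
  have hL : 0 < L := lt_of_lt_of_le hμ hμL
  have hβ : 0 < β := lt_of_lt_of_le hα hαβ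
  set ρ : ℝ := α ^ 2 * μ / (β ^ 2 * L) with hρ
  have hρ1 : 0 ≤ 1 - ρ := by
    rw [hρ, sub_nonneg, div_le_one (by positivity)]
    nlinarith [mul_le_mul_of_nonneg_right (pow_le_pow_left₀ hα.le hαβ 2) hμ.le,
      mul_le_mul_of_nonneg_left hμL (sq_nonneg β)]
  have hnn : ∀ k, 0 ≤ f (x k) - f xstar := fun k => sub_nonneg.mpr (hmin _)
  -- PL inequality
  have hPL : ∀ z, 2 * μ * (f z - f xstar) ≤ ‖g z‖ ^ 2 := by
    intro z
    have h := hsc z xstar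
    have hcs : -(‖g z‖ * ‖xstar - z‖) ≤ ⟪g z, xstar - z⟫ := by
      have := abs_real_inner_le_norm (g z) (xstar - z)
      have := neg_abs_le (⟪g z, xstar - z⟫)
      linarith
    have h1 : f z - f xstar ≤ ‖g z‖ * ‖xstar - z‖ - μ / 2 * ‖xstar - z‖ ^ 2 := by
      linarith
    nlinarith [mul_le_mul_of_nonneg_left h1 (le_of_lt hμ),
      sq_nonneg (‖g z‖ - μ * ‖xstar - z‖)]
  -- per-step contraction
  have step : ∀ k, f (x (k + 1)) - f xstar ≤ (1 - ρ) * (f (x k) - f xstar) := by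
    intro k
    have hMsym := hBsym k
    have hlow : ∀ v : EuclideanSpace ℝ (Fin n),
        α * ‖v‖ ^ 2 ≤ dotProduct v ((B k) *ᵥ v) := by
      intro v
      have h := (hBlow k).dotProduct_mulVec_nonneg v
      simp only [star_trivial, sub_mulVec, dotProduct_sub, smul_mulVec, one_mulVec,
        dotProduct_smul, smul_eq_mul] at h
      rw [dot_self_eq_norm_sq v] at h
      linarith
    have hup : ∀ v : EuclideanSpace ℝ (Fin n),
        dotProduct v ((B k) *ᵥ v) ≤ β * ‖v‖ ^ 2 := by
      intro v
      have h := (hBup k).dotProduct_mulVec_nonneg v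
      simp only [star_trivial, sub_mulVec, dotProduct_sub, smul_mulVec, one_mulVec,
        dotProduct_smul, smul_eq_mul] at h
      rw [dot_self_eq_norm_sq v] at h
      linarith
    have hpos : ∀ z : Fin n → ℝ, 0 ≤ dotProduct z ((B k) *ᵥ z) := by
      intro z
      exact le_trans (by positivity) (hlow (WithLp.toLp 2 z))
    set G : EuclideanSpace ℝ (Fin n) := g (x k) with hG
    set w : EuclideanSpace ℝ (Fin n) := WithLp.toLp 2 ((B k) *ᵥ G) with hw
    -- ‖w‖² ≤ β² ‖G‖²
    have hnormB : ‖w‖ ^ 2 ≤ β ^ 2 * ‖G‖ ^ 2 := by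
      have hww : ‖w‖ ^ 2 = dotProduct G ((B k) *ᵥ w) := by
        rw [← dot_self_eq_norm_sq w]
        show dotProduct ((B k) *ᵥ G) w = _
        rw [dotProduct_comm, dot_mulVec_symm hMsym w G]
      have hCS := dot_mulVec_CS hMsym hpos G w
      have h1 := hup G
      have h2 := hup w
      have h3 := hpos G
      have h4 := hpos w
      rcases eq_or_lt_of_le (norm_nonneg w) with h0 | h0
      · rw [← h0]
        norm_num
        positivity
      · have hGw : (dotProduct G ((B k) *ᵥ w)) ^ 2 ≤ (β * ‖G‖ ^ 2) * (β * ‖w‖ ^ 2) := by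
          calc (dotProduct G ((B k) *ᵥ w)) ^ 2
              ≤ dotProduct G ((B k) *ᵥ G) * dotProduct w ((B k) *ᵥ w) := hCS
            _ ≤ (β * ‖G‖ ^ 2) * (β * ‖w‖ ^ 2) := by nlinarith
        rw [← hww] at hGw
        nlinarith [pow_pos h0 2]
    -- descent step
    have hdw : d k = w := WithLp.ofLp_injective 2 (hd k)
    have hdiff : x (k + 1) - x k = -(t • d k) := by rw [hupd k]; abel
    have hdes := descent_lemma hgrad hlip (x k) (x (k + 1))
    rw [hdiff] at hdes
    have htpos : 0 < t := by rw [ht]; positivity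
    have hinner : ⟪g (x k), -(t • d k)⟫ = -(t * dotProduct G ((B k) *ᵥ G)) := by
      rw [inner_neg_right, real_inner_smul_right, hdw, ← dot_eq_inner']
    have hnormd : ‖-(t • d k)‖ ^ 2 = t ^ 2 * ‖w‖ ^ 2 := by
      rw [norm_neg, norm_smul, mul_pow, hdw]
      congr 1
      rw [Real.norm_eq_abs, sq_abs]
    rw [hinner, hnormd] at hdes
    -- combine
    have hlowG := hlow G
    have hmul1 : t * (α * ‖G‖ ^ 2) ≤ t * dotProduct G ((B k) *ᵥ G) :=
      mul_le_mul_of_nonneg_left hlowG htpos.le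
    have hmul2 : L / 2 * (t ^ 2 * ‖w‖ ^ 2) ≤ L / 2 * (t ^ 2 * (β ^ 2 * ‖G‖ ^ 2)) := by
      have : 0 ≤ L / 2 * t ^ 2 := by positivity
      nlinarith [hnormB]
    have hkey : f (x (k + 1)) ≤ f (x k) - t * α * ‖G‖ ^ 2
        + L / 2 * t ^ 2 * β ^ 2 * ‖G‖ ^ 2 := by nlinarith [hdes, hmul1, hmul2]
    have htα : t * α = α ^ 2 / (L * β ^ 2) := by
      rw [ht]; field_simp
    have ht2 : L / 2 * t ^ 2 * β ^ 2 = α ^ 2 / (L * β ^ 2) / 2 := by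
      rw [ht]; field_simp
    rw [htα, ht2] at hkey
    have hc : (0:ℝ) < α ^ 2 / (L * β ^ 2) := by positivity
    have hPLk := hPL (x k)
    rw [← hG] at hPLk
    have hρc : ρ = α ^ 2 / (L * β ^ 2) * μ := by rw [hρ]; ring
    rw [hρc]
    nlinarith [mul_le_mul_of_nonneg_left hPLk (le_of_lt hc)]
  intro k
  induction k with
  | zero => simp
  | succ k ih =>
    calc f (x (k + 1)) - f xstar ≤ (1 - ρ) * (f (x k) - f xstar) := step k
      _ ≤ (1 - ρ) * ((1 - ρ) ^ k * (f (x 0) - f xstar)) :=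
          mul_le_mul_of_nonneg_left ih hρ1
      _ = (1 - ρ) ^ (k + 1) * (f (x 0) - f xstar) := by ring
end
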